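/- arXiv:1803.04121 — 3 statements merged into one kernel-verified Lean document; each statement's English description precedes it below -/
import Mathlib

section
/- Let N be a closed subset of ℝⁿ (or a complete Riemannian manifold) and q ∉ N. Then there exist δ > 0 and a unit speed minimal geodesic segment α : [0,δ] → M ending at q = α(δ) such that d_N(α(t)) = d_N(α(0)) + t for all t ∈ [0,δ]; i.e., there exists a d_N-geodesic ending at q. -/
/-- For a closed nonempty subset `N` of Euclidean space and a point `q ∉ N`,
there exists a `d_N`-geodesic ending at `q`: a unit speed minimal geodesic
segment `α : [0,δ] → M` with `α δ = q` along which the distance function to `N`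
increases at unit rate. -/
theorem exists_dN_geodesic_to_point
    {n : ℕ} (N : Set (EuclideanSpace ℝ (Fin n)))
    (hN : IsClosed N) (hne : N.Nonempty)
    (q : EuclideanSpace ℝ (Fin n)) (hq : q ∉ N) :
    ∃ δ : ℝ, 0 < δ ∧ ∃ α : ℝ → EuclideanSpace ℝ (Fin n),
      α δ = q ∧
      (∀ s t : ℝ, 0 ≤ s → s ≤ t → t ≤ δ → dist (α s) (α t) = t - s) ∧
      (∀ t ∈ Set.Icc (0 : ℝ) δ,
        Metric.infDist (α t) N = Metric.infDist (α 0) N + t) := by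
  obtain ⟨p, hpN, hpd⟩ := hN.exists_infDist_eq_dist hne q
  set δ := Metric.infDist q N with hδdef
  have hδpos : 0 < δ := (hN.notMem_iff_infDist_pos hne).mp hq
  refine ⟨δ, hδpos, fun t => p + (t / δ) • (q - p), ?_, ?_, ?_⟩
  · simp [div_self hδpos.ne']
  · intro s t hs hst htδ
    have hqp : ‖q - p‖ = δ := by
      rw [← dist_eq_norm]; exact hpd.symm
    have : dist (p + (s / δ) • (q - p)) (p + (t / δ) • (q - p)) = |s / δ - t / δ| * ‖q - p‖ := by
      rw [dist_eq_norm]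
      have : p + (s / δ) • (q - p) - (p + (t / δ) • (q - p)) = (s / δ - t / δ) • (q - p) := by
        module
      rw [this, norm_smul, Real.norm_eq_abs]
    rw [this, hqp, ← sub_div, abs_div, abs_of_nonpos (by linarith), abs_of_pos hδpos,
      div_mul_cancel₀ _ hδpos.ne']
    ring
  · intro t ht
    obtain ⟨ht0, htδ⟩ := ht
    have hdist : ∀ s t : ℝ, 0 ≤ s → s ≤ t → t ≤ δ →
        dist (p + (s / δ) • (q - p)) (p + (t / δ) • (q - p)) = t - s := by
      intro s t hs hst htδ
      have hqp : ‖q - p‖ = δ := by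
        rw [← dist_eq_norm]; exact hpd.symm
      have : dist (p + (s / δ) • (q - p)) (p + (t / δ) • (q - p))
          = |s / δ - t / δ| * ‖q - p‖ := by
        rw [dist_eq_norm]
        have : p + (s / δ) • (q - p) - (p + (t / δ) • (q - p)) = (s / δ - t / δ) • (q - p) := by
          module
        rw [this, norm_smul, Real.norm_eq_abs]
      rw [this, hqp, ← sub_div, abs_div, abs_of_nonpos (by linarith), abs_of_pos hδpos,
        div_mul_cancel₀ _ hδpos.ne']
      ring
    have h0 : (fun t => p + (t / δ) • (q - p)) 0 = p := by simp
    have hα0 : Metric.infDist (p + ((0:ℝ) / δ) • (q - p)) N = 0 := by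
      simp [Metric.infDist_zero_of_mem hpN]
    have hqeq : p + (δ / δ) • (q - p) = q := by
      rw [div_self hδpos.ne']; simp
    -- upper bound
    have hub : Metric.infDist (p + (t / δ) • (q - p)) N ≤ t := by
      calc Metric.infDist (p + (t / δ) • (q - p)) N
          ≤ dist (p + (t / δ) • (q - p)) p := Metric.infDist_le_dist_of_mem hpN
        _ = t := by
            have := hdist 0 t le_rfl ht0 htδ
            rw [dist_comm]
            simpa using this
    have hlb : t ≤ Metric.infDist (p + (t / δ) • (q - p)) N := by
      have h1 : Metric.infDist q N ≤ Metric.infDist (p + (t / δ) • (q - p)) N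
          + dist q (p + (t / δ) • (q - p)) := Metric.infDist_le_infDist_add_dist
      have h2 : dist q (p + (t / δ) • (q - p)) = δ - t := by
        have := hdist t δ ht0 htδ le_rfl
        rw [hqeq] at this
        rw [dist_comm]; exact this
      rw [h2, ← hδdef] at h1
      linarith
    simp only [hα0]
    linarith
end

section
/- Let M be a complete Riemannian manifold, f : M → ℝ 1-Lipschitz, p ∈ M, and suppose γ : [f(p) − δ, f(p)] → M is a unit speed minimal geodesic ending at p = γ(f(p)) with f(γ(t)) = t for all t. Let c : (a,b) → M be a curve differentiable at t₀ with c(t₀) = p, such that f ∘ c is differentiable at t₀. Then (f ∘ c)′(t₀) = ⟨γ′(f(p)), c′(t₀)⟩, the Riemannian inner product of the velocity of γ at p with c′(t₀). -/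
/-!
Put `q = γ (f p - δ)`. Since `f` is 1-Lipschitz and `f p - f q = δ = dist p q`, the function
`f - dist · q` attains its maximum `f q` at `p`; hence along `c` the derivative of `f ∘ c` at `t₀`
equals that of `dist (c ·) q`, namely `⟪(p - q) / δ, c'⟫`. In a strictly convex space the minimal
geodesic `γ` is the affinely parametrised segment from `q` to `p`, so its velocity is `(p - q) / δ`.
-/

open AffineMap Set
open scoped RealInnerProductSpace

theorem HasDerivAt.norm_of_ne_zero {F : Type*} [NormedAddCommGroup F] [InnerProductSpace ℝ F]
    {g : ℝ → F} {g' : F} {t : ℝ} (hg : HasDerivAt g g' t) (h0 : g t ≠ 0) :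
    HasDerivAt (fun s => ‖g s‖) (⟪g t, g'⟫ / ‖g t‖) t := by
  have hsq : HasDerivAt (fun s => √(‖g s‖ ^ 2)) (2 * ⟪g t, g'⟫ / (2 * √(‖g t‖ ^ 2))) t :=
    hg.norm_sq.sqrt (by positivity)
  simp only [Real.sqrt_sq (norm_nonneg _)] at hsq
  convert hsq using 1
  ring

section UnitSpeedSegment

variable {E : Type*} [NormedAddCommGroup E] [NormedSpace ℝ E] {γ : ℝ → E} {a b : ℝ}

theorem eqOn_lineMap_of_dist_eq_sub [StrictConvexSpace ℝ E] (hab : a < b)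
    (hγ : ∀ s t, a ≤ s → s ≤ t → t ≤ b → dist (γ s) (γ t) = t - s) :
    EqOn γ (fun s => lineMap (γ a) (γ b) ((s - a) / (b - a))) (Icc a b) := by
  rintro s ⟨has, hsb⟩
  have hbtw : Wbtw ℝ (γ a) (γ s) (γ b) := by
    rw [← dist_add_dist_eq_iff, hγ a s le_rfl has hsb, hγ s b has hsb le_rfl,
      hγ a b le_rfl hab.le le_rfl]
    ring
  obtain ⟨r, ⟨hr0, -⟩, hr⟩ := hbtw
  have hdist : r * (b - a) = s - a := by
    rw [← hγ a b le_rfl hab.le le_rfl, ← hγ a s le_rfl has hsb, dist_comm (γ a) (γ s),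
      ← hr, dist_lineMap_left, Real.norm_of_nonneg hr0]
  simp only [← hr, ← hdist, mul_div_cancel_right₀ _ (sub_pos.2 hab).ne']

theorem HasDerivWithinAt.eq_slope_of_dist_eq_sub [StrictConvexSpace ℝ E] (hab : a < b)
    (hγ : ∀ s t, a ≤ s → s ≤ t → t ≤ b → dist (γ s) (γ t) = t - s)
    {v : E} {t : ℝ} (ht : t ∈ Icc a b) (hv : HasDerivWithinAt γ v (Icc a b) t) :
    v = slope γ a b := by
  have hline : HasDerivAt (fun s => lineMap (γ a) (γ b) ((s - a) / (b - a)))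
      ((b - a)⁻¹ • (γ b - γ a)) t := by
    simpa [div_eq_mul_inv, Function.comp_def] using
      hasDerivAt_lineMap.scomp t (((hasDerivAt_id t).sub_const a).div_const (b - a))
  exact (uniqueDiffOn_Icc hab t ht).eq_deriv _ hv
    (hline.hasDerivWithinAt.congr_of_mem (eqOn_lineMap_of_dist_eq_sub hab hγ) ht)

end UnitSpeedSegment

theorem LipschitzWith.hasDerivAt_comp_eq_inner {E : Type*} [NormedAddCommGroup E]
    [InnerProductSpace ℝ E] {f : E → ℝ} (hf : LipschitzWith 1 f) {q : E} {c : ℝ → E} {c' : E}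
    {t₀ y : ℝ} (hq : c t₀ ≠ q) (hfq : f (c t₀) - f q = dist (c t₀) q)
    (hc : HasDerivAt c c' t₀) (hy : HasDerivAt (f ∘ c) y t₀) :
    y = ⟪c t₀ - q, c'⟫ / ‖c t₀ - q‖ := by
  have hdist := (hc.sub_const q).norm_of_ne_zero (sub_ne_zero.2 hq)
  -- `f ≤ f q + dist · q` by the Lipschitz bound, with equality at `c t₀`.
  have hmax : IsLocalMax (fun t => f (c t) - ‖c t - q‖) t₀ :=
    Filter.Eventually.of_forall fun t => by
      have := hf.le_add_mul (c t) q
      simp only [NNReal.coe_one, one_mul, dist_eq_norm] at this hfq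
      linarith
  linarith [hmax.hasDerivAt_eq_zero (hy.sub hdist)]

theorem deriv_along_curve_eq_inner_with_f_geodesic_velocity_general
    {E : Type*} [NormedAddCommGroup E] [InnerProductSpace ℝ E]
    (f : E → ℝ) (hf : LipschitzWith 1 f)
    (p : E) (δ : ℝ) (hδ : 0 < δ)
    (γ : ℝ → E) (hγp : γ (f p) = p)
    (hγgeo : ∀ s t : ℝ, f p - δ ≤ s → s ≤ t → t ≤ f p →
      dist (γ s) (γ t) = t - s)
    (hγf : ∀ t ∈ Set.Icc (f p - δ) (f p), f (γ t) = t)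
    (v : E) (hv : HasDerivWithinAt γ v (Set.Icc (f p - δ) (f p)) (f p))
    (t₀ : ℝ)
    (c : ℝ → E) (hc : c t₀ = p)
    (c' : E) (hc' : HasDerivAt c c' t₀)
    (y : ℝ) (hy : HasDerivAt (f ∘ c) y t₀) :
    y = (inner ℝ v c' : ℝ) := by
  set q := γ (f p - δ)
  have hδp : f p - δ < f p := by linarith
  have hpq : dist p q = δ := by
    rw [← hγp, dist_comm, hγgeo _ _ le_rfl hδp.le le_rfl]
    ring
  have hv_eq : v = δ⁻¹ • (p - q) := by
    rw [hv.eq_slope_of_dist_eq_sub hδp hγgeo (right_mem_Icc.2 hδp.le), slope_def_module, hγp,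
      sub_sub_cancel]
  have hfq : f q = f p - δ := hγf _ (left_mem_Icc.2 hδp.le)
  have hy_eq := hf.hasDerivAt_comp_eq_inner (q := q)
    (by rw [hc, ← dist_ne_zero, hpq]; exact hδ.ne') (by rw [hc, hfq, hpq]; ring) hc' hy
  rw [hy_eq, hv_eq, hc, real_inner_smul_left, ← dist_eq_norm, hpq, inv_mul_eq_div]

/-- First variation formula along an `f`-geodesic ending at `p` (Euclidean
model of a complete Riemannian manifold): if `γ` is a unit speed minimal
geodesic ending at `p = γ (f p)` with `f (γ t) = t`, and `c` is a curve through
`p = c t₀` such that `c` and `f ∘ c` are differentiable at `t₀`, then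
`(f ∘ c)' t₀ = ⟨γ'(f p), c' t₀⟩`. -/
theorem deriv_along_curve_eq_inner_with_f_geodesic_velocity
    {E : Type*} [NormedAddCommGroup E] [InnerProductSpace ℝ E]
    [CompleteSpace E]
    (f : E → ℝ) (hf : LipschitzWith 1 f)
    (p : E) (δ : ℝ) (hδ : 0 < δ)
    (γ : ℝ → E) (hγp : γ (f p) = p)
    (hγgeo : ∀ s t : ℝ, f p - δ ≤ s → s ≤ t → t ≤ f p →
      dist (γ s) (γ t) = t - s)
    (hγf : ∀ t ∈ Set.Icc (f p - δ) (f p), f (γ t) = t)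
    (v : E) (hv : HasDerivWithinAt γ v (Set.Icc (f p - δ) (f p)) (f p))
    (a b t₀ : ℝ) (ht₀ : t₀ ∈ Set.Ioo a b)
    (c : ℝ → E) (hc : c t₀ = p)
    (c' : E) (hc' : HasDerivAt c c' t₀)
    (y : ℝ) (hy : HasDerivAt (f ∘ c) y t₀) :
    y = (inner ℝ v c' : ℝ) :=
  deriv_along_curve_eq_inner_with_f_geodesic_velocity_general f hf p δ hδ γ hγp hγgeo hγf v hv t₀ c
    hc c' hc' y hy
end

section
/- Let M be a complete Riemannian manifold, f : M → ℝ a 1-Lipschitz function, and suppose p admits two distinct f-geodesics ending at p, i.e., two unit speed minimal geodesics α, β : [f(p) − δ, f(p)] → M ending at p with f∘α(t) = f∘β(t) = t and α′(f(p)) ≠ β′(f(p)). Then there is no f-geodesic emanating from p, i.e., no unit speed geodesic γ : [f(p), f(p) + ε] → M (ε > 0) starting at p with f(γ(t)) = t for all t. -/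
/-- Auxiliary: a unit-speed curve ending at `p` whose distance to the point
`p + q` is exactly `c + ε - s` must be a straight segment in direction `q`,
and hence its (one-sided) derivative at `c` is `ε⁻¹ • q`. -/
lemma aux_deriv_eq {E : Type*} [NormedAddCommGroup E] [InnerProductSpace ℝ E]
    (p : E) (c δ ε : ℝ) (hδ : 0 < δ) (hε : 0 < ε) (q : E) (hq : ‖q‖ = ε)
    (α : ℝ → E) (hαp : α c = p)
    (hdist : ∀ s ∈ Set.Icc (c - δ) c, dist (α s) (p + q) = c + ε - s)
    (hnorm : ∀ s ∈ Set.Icc (c - δ) c, dist (α s) p = c - s)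
    {a' : E} (ha' : HasDerivWithinAt α a' (Set.Icc (c - δ) c) c) :
    a' = ε⁻¹ • q := by
  have hc : c ∈ Set.Icc (c - δ) c := ⟨by linarith, le_rfl⟩
  have hEq : ∀ s ∈ Set.Icc (c - δ) c, α s = p + ((s - c) / ε) • q := by
    intro s hs
    rcases eq_or_lt_of_le hs.2 with h | h
    · subst h; simp [hαp]
    · set x : E := p - α s with hx
      have hxn : ‖x‖ = c - s := by
        rw [hx, ← neg_sub, norm_neg, ← dist_eq_norm]
        exact hnorm s hs
      have hxy : ‖x + q‖ = ‖x‖ + ‖q‖ := by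
        have : x + q = (p + q) - α s := by rw [hx]; abel
        rw [this, ← dist_eq_norm, dist_comm, hdist s hs, hxn, hq]; ring
      have hx0 : x ≠ 0 := by
        intro h0; rw [h0, norm_zero] at hxn; linarith
      have hq0 : q ≠ 0 := by
        intro h0; rw [h0, norm_zero] at hq; linarith
      obtain ⟨r, hr, hrx⟩ :=
        (sameRay_iff_norm_add.mpr hxy).exists_pos_left hx0 hq0
      have hrn : r * (c - s) = ε := by
        have := congrArg norm hrx
        rwa [norm_smul, Real.norm_eq_abs, abs_of_pos hr, hxn, hq] at this
      have hxval : x = ((c - s) / ε) • q := by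
        rw [← hrx, smul_smul]
        have : (c - s) / ε * r = 1 := by
          field_simp
          nlinarith [hrn]
        rw [this, one_smul]
      have : α s = p - ((c - s) / ε) • q := by
        rw [← hxval, hx]; abel
      rw [this]
      have : ((s - c) / ε) • q = -(((c - s) / ε) • q) := by
        rw [← neg_smul]; ring_nf
      rw [this]; abel
  have hg : HasDerivAt (fun s : ℝ => p + ((s - c) / ε) • q) (ε⁻¹ • q) c := by
    have h1 : HasDerivAt (fun s : ℝ => ((s - c) / ε) • q) ((1 / ε) • q) c :=
      (((hasDerivAt_id c).sub_const c).div_const ε).smul_const q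
    rw [one_div] at h1
    exact h1.const_add p
  have hg' : HasDerivWithinAt α (ε⁻¹ • q) (Set.Icc (c - δ) c) c :=
    hg.hasDerivWithinAt.congr hEq (hEq c hc)
  exact (uniqueDiffOn_Icc (by linarith : c - δ < c) c hc).eq_deriv _ ha' hg'

/-- If a point `p` admits two distinct `f`-geodesics ending at `p` (with
distinct velocity vectors at `p`), then no `f`-geodesic emanates from `p`
(Euclidean model of a complete Riemannian manifold). -/
theorem two_f_geodesics_to_point_implies_no_f_geodesic_from_point
    {E : Type*} [NormedAddCommGroup E] [InnerProductSpace ℝ E]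
    [CompleteSpace E]
    (f : E → ℝ) (hf : LipschitzWith 1 f)
    (p : E) (δ : ℝ) (hδ : 0 < δ)
    (α β : ℝ → E)
    (hαp : α (f p) = p) (hβp : β (f p) = p)
    (hαgeo : ∀ s t : ℝ, f p - δ ≤ s → s ≤ t → t ≤ f p →
      dist (α s) (α t) = t - s)
    (hβgeo : ∀ s t : ℝ, f p - δ ≤ s → s ≤ t → t ≤ f p →
      dist (β s) (β t) = t - s)
    (hαf : ∀ t ∈ Set.Icc (f p - δ) (f p), f (α t) = t)
    (hβf : ∀ t ∈ Set.Icc (f p - δ) (f p), f (β t) = t)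
    (a' b' : E)
    (ha' : HasDerivWithinAt α a' (Set.Icc (f p - δ) (f p)) (f p))
    (hb' : HasDerivWithinAt β b' (Set.Icc (f p - δ) (f p)) (f p))
    (hne : a' ≠ b') :
    ¬ ∃ ε : ℝ, 0 < ε ∧ ∃ γ : ℝ → E, γ (f p) = p ∧
      (∀ s t : ℝ, f p ≤ s → s ≤ t → t ≤ f p + ε →
        dist (γ s) (γ t) = t - s) ∧
      (∀ t ∈ Set.Icc (f p) (f p + ε), f (γ t) = t) := by
  rintro ⟨ε, hε, γ, hγp, hγgeo, hγf⟩
  set q : E := γ (f p + ε) - p with hqdef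
  have hpq : γ (f p + ε) = p + q := by rw [hqdef]; abel
  have hq : ‖q‖ = ε := by
    have := hγgeo (f p) (f p + ε) le_rfl (by linarith) le_rfl
    rw [hγp, dist_comm, dist_eq_norm] at this
    rw [hqdef]
    linarith [this]
  have key : ∀ (η : ℝ → E), η (f p) = p →
      (∀ s t : ℝ, f p - δ ≤ s → s ≤ t → t ≤ f p → dist (η s) (η t) = t - s) →
      (∀ t ∈ Set.Icc (f p - δ) (f p), f (η t) = t) →
      ∀ e' : E, HasDerivWithinAt η e' (Set.Icc (f p - δ) (f p)) (f p) →
      e' = ε⁻¹ • q := by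
    intro η hηp hηgeo hηf e' he'
    refine aux_deriv_eq p (f p) δ ε hδ hε q hq η hηp ?_ ?_ he'
    · intro s hs
      have hlow : f p + ε - s ≤ dist (η s) (p + q) := by
        have h1 := hf.dist_le_mul (η s) (p + q)
        rw [← hpq] at h1 ⊢
        rw [hηf s hs, hγf (f p + ε) ⟨by linarith, le_rfl⟩] at h1
        have : |s - (f p + ε)| ≤ dist (η s) (γ (f p + ε)) := by
          simpa [Real.dist_eq] using h1
        have habs : |s - (f p + ε)| = f p + ε - s := by
          rw [abs_of_nonpos (by linarith [hs.2])]; ring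
        linarith [habs ▸ this]
      have hup : dist (η s) (p + q) ≤ f p + ε - s := by
        have h1 : dist (η s) p = f p - s := by
          have := hηgeo s (f p) hs.1 hs.2 le_rfl
          rwa [hηp] at this
        have h2 : dist p (p + q) = ε := by
          rw [dist_eq_norm]; simp [hq]
        calc dist (η s) (p + q) ≤ dist (η s) p + dist p (p + q) :=
              dist_triangle _ _ _
          _ = f p + ε - s := by rw [h1, h2]; ring
      linarith
    · intro s hs
      have := hηgeo s (f p) hs.1 hs.2 le_rfl
      rwa [hηp] at this
  have hA := key α hαp hαgeo hαf a' ha'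
  have hB := key β hβp hβgeo hβf b' hb'
  exact hne (hA.trans hB.symm)
end
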